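/- The set X²₁ = { Σ_{n=1}^∞ δₙ ∏_{j=1}^n ηⱼ : (δₙ) ∈ W^±_θ, first nonzero digit = 1 }, with η₁ = α and η_{j+1} = conj(ηⱼ), satisfies the set equation X²₁ = ψ₁(X²₁) ∪ ψ₂(X²₁), where ψ₁(z) = α·z̄ and ψ₂(z) = α e^{iθ}·z̄ + α. -/

import Mathlib

open Complex

/-- e^{iθ} -/
noncomputable def rot (θ : ℝ) : ℂ := Complex.exp (θ * Complex.I)

/-- The digit set Δ_θ = {0, 1, e^{iθ}, …, e^{(p-1)iθ}}. -/
def Delta (θ : ℝ) (p : ℕ) : Set ℂ := insert 0 {z | ∃ k, k < p ∧ z = rot θ ^ k}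

/-- Signed Revolving Condition: each nonzero digit equals e^{+iθ} times the previous
nonzero digit if its position j₀ is odd, and e^{-iθ} times it if j₀ is even.
Sequences are indexed from 1; index 0 is a dummy (digit 0). -/
def SRC (θ : ℝ) (δ : ℕ → ℂ) : Prop :=
  ∀ j k : ℕ, j < k → δ j ≠ 0 → δ k ≠ 0 → (∀ m, j < m → m < k → δ m = 0) →
    δ k = (if Odd j then rot θ else (rot θ)⁻¹) * δ j

/-- Membership in W^±_θ (with the convention δ 0 = 0, i.e. sequences start at index 1). -/
def Wsigned (θ : ℝ) (p : ℕ) (δ : ℕ → ℂ) : Prop :=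
  δ 0 = 0 ∧ (∀ n, δ n ∈ Delta θ p) ∧ SRC θ δ

/-- The first nonzero digit of δ is c (or δ is identically zero). -/
def FirstNonzero (δ : ℕ → ℂ) (c : ℂ) : Prop :=
  (∀ n, δ n = 0) ∨ ∃ j, δ j = c ∧ ∀ m, m < j → δ m = 0

/-- η_j = α for odd j, conj α for even j. -/
noncomputable def eta (α : ℂ) (j : ℕ) : ℂ := if Odd j then α else starRingEnd ℂ α

/-- X²₁ : points from signed revolving sequences with first nonzero digit 1. -/
noncomputable def X2one (α : ℂ) (θ : ℝ) (p : ℕ) : Set ℂ :=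
  {x | ∃ δ : ℕ → ℂ, Wsigned θ p δ ∧ FirstNonzero δ 1 ∧
    x = ∑' n, δ n * ∏ j ∈ Finset.Icc 1 n, eta α j}

/-- X²_{α,θ} : points from all signed revolving sequences. -/
noncomputable def X2full (α : ℂ) (θ : ℝ) (p : ℕ) : Set ℂ :=
  {x | ∃ δ : ℕ → ℂ, Wsigned θ p δ ∧
    x = ∑' n, δ n * ∏ j ∈ Finset.Icc 1 n, eta α j}

/-! Splitting off the first digit: if `δ' n = u · conj (δ (n + 1))` for `n ≥ 1`, with `u = 1`
when `δ 1 = 0` and `u = e^{iθ}` when `δ 1 = 1`, then `δ'` is again admissible with first nonzero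
digit `1`, and conversely. Since `η (j + 1) = conj (η j)`, the partial products satisfy
`∏_{j ≤ n+1} η j = α · conj (∏_{j ≤ n} η j)`, so the series of `δ` equals `ψ₁` resp. `ψ₂` applied
to that of `δ'`. The SRC survives the shift because conjugation exchanges `e^{iθ}` and `e^{-iθ}`
exactly as the shift of positions flips their parity. -/

open Function ComplexConjugate

lemma rot_ne_zero (θ : ℝ) : rot θ ≠ 0 := Complex.exp_ne_zero _

lemma norm_rot (θ : ℝ) : ‖rot θ‖ = 1 := by
  simp [rot, Complex.norm_exp]

lemma conj_rot (θ : ℝ) : conj (rot θ) = (rot θ)⁻¹ := by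
  rw [rot, ← Complex.exp_conj, ← Complex.exp_neg]
  simp

lemma rot_mul_conj (θ : ℝ) : rot θ * conj (rot θ) = 1 := by
  rw [conj_rot, mul_inv_cancel₀ (rot_ne_zero θ)]

lemma rot_two_pi_div_pow (q : ℤ) (p : ℕ) : rot (2 * Real.pi * q / p) ^ p = 1 := by
  rcases Nat.eq_zero_or_pos p with rfl | hp
  · exact pow_zero _
  rw [rot, ← Complex.exp_nat_mul, ← Complex.exp_int_mul_two_pi_mul_I q]
  have hp' : (p : ℂ) ≠ 0 := by exact_mod_cast hp.ne'
  congr 1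
  push_cast
  field_simp

lemma conj_rot_factor (θ : ℝ) (j : ℕ) :
    conj (if Odd j then rot θ else (rot θ)⁻¹) = if Odd (j + 1) then rot θ else (rot θ)⁻¹ := by
  by_cases h : Odd j <;> simp [h, Nat.odd_add_one, conj_rot]

section Delta

variable {θ : ℝ} {p : ℕ}

lemma norm_le_one_of_mem_Delta {z : ℂ} (hz : z ∈ Delta θ p) : ‖z‖ ≤ 1 := by
  obtain rfl | ⟨k, -, rfl⟩ := hz <;> simp [norm_rot]

variable (hp : 0 < p) (hrot : rot θ ^ p = 1)
include hp hrot

lemma mem_Delta_iff {z : ℂ} : z ∈ Delta θ p ↔ z = 0 ∨ ∃ k : ℕ, z = rot θ ^ k := by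
  refine ⟨Or.imp_right fun ⟨k, _, hk⟩ => ⟨k, hk⟩, Or.imp_right fun ⟨k, hk⟩ => ?_⟩
  refine ⟨k % p, Nat.mod_lt _ hp, ?_⟩
  conv_lhs => rw [hk, ← Nat.mod_add_div k p, pow_add, pow_mul, hrot, one_pow, mul_one]

lemma rot_pow_mem_Delta (k : ℕ) : rot θ ^ k ∈ Delta θ p :=
  (mem_Delta_iff hp hrot).2 (Or.inr ⟨k, rfl⟩)

lemma mul_mem_Delta {z w : ℂ} (hz : z ∈ Delta θ p) (hw : w ∈ Delta θ p) :
    z * w ∈ Delta θ p := by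
  rw [mem_Delta_iff hp hrot] at hz hw ⊢
  obtain rfl | ⟨k, rfl⟩ := hz
  · simp
  obtain rfl | ⟨l, rfl⟩ := hw
  · simp
  exact Or.inr ⟨k + l, (pow_add _ _ _).symm⟩

lemma conj_mem_Delta {z : ℂ} (hz : z ∈ Delta θ p) : conj z ∈ Delta θ p := by
  rw [mem_Delta_iff hp hrot] at hz
  obtain rfl | ⟨k, rfl⟩ := hz
  · simp [Delta]
  have hinv : conj (rot θ) = rot θ ^ (p - 1) := by
    rw [conj_rot, inv_eq_of_mul_eq_one_right]
    rw [← pow_succ', Nat.sub_add_cancel hp, hrot]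
  rw [map_pow, hinv, ← pow_mul]
  exact rot_pow_mem_Delta hp hrot _

end Delta

noncomputable def etaProd (α : ℂ) (n : ℕ) : ℂ := ∏ j ∈ Finset.Icc 1 n, eta α j

noncomputable def digitSum (α : ℂ) (δ : ℕ → ℂ) : ℂ := ∑' n, δ n * etaProd α n

lemma eta_succ (α : ℂ) (j : ℕ) : _root_.eta α (j + 1) = conj (_root_.eta α j) := by
  by_cases h : Odd j <;> simp [_root_.eta, h, Nat.odd_add_one]

lemma etaProd_zero (α : ℂ) : etaProd α 0 = 1 := by simp [etaProd]

lemma etaProd_succ (α : ℂ) (n : ℕ) : etaProd α (n + 1) = α * conj (etaProd α n) := by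
  have hmul (n : ℕ) : etaProd α (n + 1) = etaProd α n * _root_.eta α (n + 1) :=
    Finset.prod_Icc_succ_top (by omega) _
  induction n with
  | zero => simp [etaProd, _root_.eta]
  | succ n ih =>
    rw [hmul (n + 1)]
    conv_rhs => rw [hmul n]
    rw [ih, eta_succ, map_mul, mul_assoc]

lemma norm_etaProd (α : ℂ) (n : ℕ) : ‖etaProd α n‖ = ‖α‖ ^ n := by
  induction n with
  | zero => simp [etaProd_zero]
  | succ n ih => rw [etaProd_succ, norm_mul, Complex.norm_conj, ih, pow_succ']

lemma summable_mul_etaProd {α : ℂ} (hα : ‖α‖ < 1) {δ : ℕ → ℂ} (hδ : ∀ n, ‖δ n‖ ≤ 1) :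
    Summable fun n => δ n * etaProd α n := by
  refine Summable.of_norm_bounded (summable_geometric_of_lt_one (norm_nonneg α) hα) fun n => ?_
  rw [norm_mul, norm_etaProd]
  exact mul_le_of_le_one_left (by positivity) (hδ n)

lemma digitSum_eq_tsum_succ {α : ℂ} (hα : ‖α‖ < 1) {δ : ℕ → ℂ} (hδ : ∀ n, ‖δ n‖ ≤ 1)
    (h0 : δ 0 = 0) : digitSum α δ = ∑' n, δ (n + 1) * etaProd α (n + 1) := by
  rw [digitSum, (summable_mul_etaProd hα hδ).tsum_eq_zero_add, h0, zero_mul, zero_add]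

lemma digitSum_eq_of_succ_succ {α u : ℂ} (hα : ‖α‖ < 1) {δ δ' : ℕ → ℂ}
    (hδ : ∀ n, ‖δ n‖ ≤ 1) (hδ' : ∀ n, ‖δ' n‖ ≤ 1) (h0 : δ 0 = 0) (h0' : δ' 0 = 0)
    (h : ∀ m, δ (m + 2) = u * conj (δ' (m + 1))) :
    digitSum α δ = α * u * conj (digitSum α δ') + α * δ 1 := by
  have hs : Summable fun n => δ (n + 1) * etaProd α (n + 1) :=
    (summable_mul_etaProd hα hδ).comp_injective (add_left_injective 1)
  have hterm (m : ℕ) : δ (m + 1 + 1) * etaProd α (m + 1 + 1) =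
      α * u * conj (δ' (m + 1) * etaProd α (m + 1)) := by
    rw [h, etaProd_succ α (m + 1), map_mul]
    ring
  rw [digitSum_eq_tsum_succ hα hδ h0, hs.tsum_eq_zero_add, tsum_congr hterm, tsum_mul_left,
    ← Complex.conj_tsum, ← digitSum_eq_tsum_succ hα hδ' h0', etaProd_succ, etaProd_zero]
  simp only [map_one]
  ring

lemma firstNonzero_iff {δ : ℕ → ℂ} {c : ℂ} (hc : c ≠ 0) :
    FirstNonzero δ c ↔ ∀ k, δ k ≠ 0 → (∀ m < k, δ m = 0) → δ k = c := by
  constructor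
  · rintro (hall | ⟨j, hj, hlt⟩) k hk hkmin
    · exact absurd (hall k) hk
    rcases lt_trichotomy j k with h | rfl | h
    · exact absurd (hkmin j h) (hj ▸ hc)
    · exact hj
    · exact absurd (hlt k h) hk
  · intro H
    by_cases hall : ∀ n, δ n = 0
    · exact Or.inl hall
    simp only [not_forall] at hall
    have hmin : ∀ m < Nat.find hall, δ m = 0 := fun m hm => not_not.1 (Nat.find_min hall hm)
    exact Or.inr ⟨_, H _ (Nat.find_spec hall) hmin, hmin⟩

lemma firstNonzero_one_iff_of_succ_eq_conj {a b : ℕ → ℂ} (h0 : b 0 = 0)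
    (h : ∀ m, b (m + 1) = conj (a m)) : FirstNonzero b 1 ↔ FirstNonzero a 1 := by
  have hone (z : ℂ) : conj z = 1 ↔ z = 1 := map_eq_one_iff _ (RingHom.injective _)
  simp only [firstNonzero_iff one_ne_zero]
  constructor
  · intro H k hk hmin
    have := H (k + 1) (by simpa [h] using hk) (Nat.forall_lt_succ_left.2 ⟨h0, by simpa [h]⟩)
    simpa [h, hone] using this
  · rintro H (_ | k) hk hmin
    · exact absurd h0 hk
    rw [Nat.forall_lt_succ_left] at hmin
    simpa [h, hone] using H k (by simpa [h] using hk) (by simpa [h] using hmin.2)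

section SRC

variable {θ : ℝ}

lemma SRC_iff_of_succ_eq {u : ℂ} {a b : ℕ → ℂ} (hu : u ≠ 0) (h : ∀ m, b (m + 1) = u * conj (a m))
    (h01 : b 1 = (rot θ)⁻¹ * b 0) : SRC θ b ↔ SRC θ a := by
  have hzero (m : ℕ) : b (m + 1) = 0 ↔ a m = 0 := by simp [h, hu]
  have hgap (j k : ℕ) :
      (∀ m, j + 1 < m → m < k + 1 → b m = 0) ↔ ∀ m, j < m → m < k → a m = 0 := by
    refine ⟨fun H m h1 h2 => (hzero m).1 (H (m + 1) (by omega) (by omega)), fun H m h1 h2 => ?_⟩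
    obtain ⟨m, rfl⟩ : ∃ m', m = m' + 1 := ⟨m - 1, by omega⟩
    exact (hzero m).2 (H m (by omega) (by omega))
  have hstep (j k : ℕ) : b (k + 1) = (if Odd (j + 1) then rot θ else (rot θ)⁻¹) * b (j + 1) ↔
      a k = (if Odd j then rot θ else (rot θ)⁻¹) * a j := by
    rw [h, h, mul_left_comm, mul_right_inj' hu, ← conj_rot_factor, ← map_mul,
      (starRingEnd ℂ).injective.eq_iff]
  constructor
  · intro hb j k hjk hj hk hg
    rw [← hstep]
    exact hb (j + 1) (k + 1) (by omega) (by rwa [Ne, hzero]) (by rwa [Ne, hzero])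
      ((hgap j k).2 hg)
  · intro ha j k hjk hj hk hg
    obtain ⟨k, rfl⟩ : ∃ k', k = k' + 1 := ⟨k - 1, by omega⟩
    cases j with
    | zero =>
      rcases Nat.eq_zero_or_pos k with rfl | hk1
      · simpa using h01
      · have hb1 := hg 1 one_pos (by omega)
        rw [h01] at hb1
        exact absurd hb1 (mul_ne_zero (inv_ne_zero (rot_ne_zero θ)) hj)
    | succ j =>
      rw [hstep]
      exact ha j k (by omega) (by rwa [Ne, ← hzero]) (by rwa [Ne, ← hzero]) ((hgap j k).1 hg)

/-- `FirstNonzero δ 1` is the SRC step out of a phantom digit `rot θ` at the dummy index `0`. -/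
lemma SRC_update_zero_iff {δ : ℕ → ℂ} (h0 : δ 0 = 0) :
    SRC θ (update δ 0 (rot θ)) ↔ SRC θ δ ∧ FirstNonzero δ 1 := by
  have e (i : ℕ) (hi : i ≠ 0) : update δ 0 (rot θ) i = δ i := update_of_ne hi _ _
  rw [firstNonzero_iff one_ne_zero]
  constructor
  · intro hs
    refine ⟨fun j k hjk hj hk hg => ?_, fun k hk hg => ?_⟩
    · have hj0 : j ≠ 0 := by rintro rfl; exact hj h0
      have := hs j k hjk (by rwa [e j hj0]) (by rwa [e k (by omega)])
        (fun m h1 h2 => by rw [e m (by omega)]; exact hg m h1 h2)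
      rwa [e j hj0, e k (by omega)] at this
    · have hk0 : k ≠ 0 := by rintro rfl; exact hk h0
      have := hs 0 k (by omega) (by simp [rot_ne_zero]) (by rwa [e k hk0])
        (fun m h1 h2 => by rw [e m (by omega)]; exact hg m h2)
      simpa [e k hk0, rot_ne_zero] using this
  · rintro ⟨hs, hf⟩ j k hjk hj hk hg
    rw [e k (by omega)] at hk ⊢
    rcases Nat.eq_zero_or_pos j with rfl | hj0
    · have hmin : ∀ m < k, δ m = 0 := fun m hm => by
        rcases Nat.eq_zero_or_pos m with rfl | hm0
        · exact h0
        · rw [← e m (by omega)]; exact hg m hm0 hm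
      simpa [rot_ne_zero] using hf k hk hmin
    · rw [e j (by omega)] at hj ⊢
      exact hs j k hjk hj hk (fun m h1 h2 => by rw [← e m (by omega)]; exact hg m h1 h2)

end SRC

section Shift

variable {θ : ℝ} {p : ℕ} (hp : 0 < p) (hrot : rot θ ^ p = 1)
include hp hrot

lemma forall_mem_Delta_iff_of_succ_succ {u : ℂ} {δ δ' : ℕ → ℂ} (hu : u ∈ Delta θ p)
    (huu : u * conj u = 1) (h0 : δ 0 = 0) (h0' : δ' 0 = 0) (h1 : δ 1 ∈ Delta θ p)
    (h : ∀ m, δ (m + 2) = u * conj (δ' (m + 1))) :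
    (∀ n, δ n ∈ Delta θ p) ↔ ∀ n, δ' n ∈ Delta θ p := by
  have h' (m : ℕ) : δ' (m + 1) = u * conj (δ (m + 2)) := by
    rw [h, map_mul, Complex.conj_conj, ← mul_assoc, huu, one_mul]
  constructor
  · rintro hδ (_ | m)
    · exact h0' ▸ Set.mem_insert 0 _
    · rw [h']
      exact mul_mem_Delta hp hrot hu (conj_mem_Delta hp hrot (hδ _))
  · rintro hδ' (_ | _ | m)
    · exact h0 ▸ Set.mem_insert 0 _
    · exact h1
    · rw [h]
      exact mul_mem_Delta hp hrot hu (conj_mem_Delta hp hrot (hδ' _))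

lemma wsigned_and_firstNonzero_iff_of_succ_succ {c u : ℂ} {δ δ' : ℕ → ℂ}
    (hcu : c = 0 ∧ u = 1 ∨ c = 1 ∧ u = rot θ) (h0 : δ 0 = 0) (h0' : δ' 0 = 0) (h1 : δ 1 = c)
    (h : ∀ m, δ (m + 2) = u * conj (δ' (m + 1))) :
    Wsigned θ p δ ∧ FirstNonzero δ 1 ↔ Wsigned θ p δ' ∧ FirstNonzero δ' 1 := by
  have hu : u ∈ Delta θ p ∧ u * conj u = 1 := by
    rcases hcu with ⟨-, rfl⟩ | ⟨-, rfl⟩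
    · exact ⟨by simpa using rot_pow_mem_Delta hp hrot 0, by simp⟩
    · exact ⟨by simpa using rot_pow_mem_Delta hp hrot 1, rot_mul_conj θ⟩
  have hc : c ∈ Delta θ p := by
    rcases hcu with ⟨rfl, -⟩ | ⟨rfl, -⟩
    · exact Set.mem_insert 0 _
    · simpa using rot_pow_mem_Delta hp hrot 0
  have hsrc : SRC θ δ ∧ FirstNonzero δ 1 ↔ SRC θ δ' ∧ FirstNonzero δ' 1 := by
    rcases hcu with ⟨rfl, rfl⟩ | ⟨rfl, rfl⟩
    · have hs (m : ℕ) : δ (m + 1) = conj (δ' m) := by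
        cases m with
        | zero => simp [h1, h0']
        | succ m => simpa using h m
      rw [SRC_iff_of_succ_eq one_ne_zero (by simpa using hs) (by simp [h0, h1]),
        firstNonzero_one_iff_of_succ_eq_conj h0 hs]
    · rw [← SRC_update_zero_iff h0, ← SRC_update_zero_iff h0']
      refine SRC_iff_of_succ_eq (rot_ne_zero θ) (fun m => ?_) (by simp [h1, rot_ne_zero])
      cases m with
      | zero => simp [h1, rot_mul_conj]
      | succ m => simpa using h m
  simp only [Wsigned, h0, h0', true_and, and_assoc]
  exact and_congr (forall_mem_Delta_iff_of_succ_succ hp hrot hu.1 hu.2 h0 h0' (h1 ▸ hc) h) hsrc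

end Shift

section SetEquation

variable {α : ℂ} {θ : ℝ} {p : ℕ} (hp : 0 < p) (hrot : rot θ ^ p = 1) (hα : ‖α‖ < 1)
include hp hrot hα

lemma image_subset_X2one {c u : ℂ} (hcu : c = 0 ∧ u = 1 ∨ c = 1 ∧ u = rot θ) :
    (fun z => α * u * conj z + α * c) '' X2one α θ p ⊆ X2one α θ p := by
  rintro _ ⟨_, ⟨δ', hW', hF', rfl⟩, rfl⟩
  let δ : ℕ → ℂ := fun n => match n with
    | 0 => 0
    | 1 => c
    | m + 2 => u * conj (δ' (m + 1))
  obtain ⟨hW, hF⟩ :=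
    (wsigned_and_firstNonzero_iff_of_succ_succ (δ := δ) hp hrot hcu rfl hW'.1 rfl fun _ => rfl).2
      ⟨hW', hF'⟩
  refine ⟨δ, hW, hF, ?_⟩
  exact (digitSum_eq_of_succ_succ hα (fun n => norm_le_one_of_mem_Delta (hW.2.1 n))
    (fun n => norm_le_one_of_mem_Delta (hW'.2.1 n)) rfl hW'.1 fun _ => rfl).symm

lemma exists_eq_of_mem_X2one {x : ℂ} (hx : x ∈ X2one α θ p) :
    ∃ c u, (c = 0 ∧ u = 1 ∨ c = 1 ∧ u = rot θ) ∧
      ∃ y ∈ X2one α θ p, x = α * u * conj y + α * c := by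
  obtain ⟨δ, hW, hF, rfl⟩ := hx
  obtain ⟨u, hcu⟩ : ∃ u, δ 1 = 0 ∧ u = 1 ∨ δ 1 = 1 ∧ u = rot θ := by
    by_cases h : δ 1 = 0
    · exact ⟨1, Or.inl ⟨h, rfl⟩⟩
    · refine ⟨rot θ, Or.inr ⟨(firstNonzero_iff one_ne_zero).1 hF 1 h ?_, rfl⟩⟩
      simpa using hW.1
  have huu : u * conj u = 1 := by
    rcases hcu with ⟨-, rfl⟩ | ⟨-, rfl⟩
    · simp
    · exact rot_mul_conj θ
  let δ' : ℕ → ℂ := fun n => match n with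
    | 0 => 0
    | m + 1 => u * conj (δ (m + 2))
  have h (m : ℕ) : δ (m + 2) = u * conj (δ' (m + 1)) := by
    simp only [δ', map_mul, Complex.conj_conj, ← mul_assoc, huu, one_mul]
  obtain ⟨hW', hF'⟩ :=
    (wsigned_and_firstNonzero_iff_of_succ_succ hp hrot hcu hW.1 rfl rfl h).1 ⟨hW, hF⟩
  refine ⟨δ 1, u, hcu, digitSum α δ', ⟨δ', hW', hF', rfl⟩, ?_⟩
  exact digitSum_eq_of_succ_succ hα (fun n => norm_le_one_of_mem_Delta (hW.2.1 n))
    (fun n => norm_le_one_of_mem_Delta (hW'.2.1 n)) hW.1 rfl h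

end SetEquation

theorem X2one_set_equation_general (α : ℂ) (θ : ℝ) (p : ℕ) (q : ℤ) (hp : 0 < p)
    (hθ : θ = 2 * Real.pi * (q : ℝ) / (p : ℝ)) (hα : ‖α‖ < 1) :
    X2one α θ p =
      (fun z => α * starRingEnd ℂ z) '' X2one α θ p ∪
      (fun z => α * rot θ * starRingEnd ℂ z + α) '' X2one α θ p := by
  have hrot : rot θ ^ p = 1 := hθ ▸ rot_two_pi_div_pow q p
  ext x
  constructor
  · intro hx
    obtain ⟨c, u, hcu, y, hy, rfl⟩ := exists_eq_of_mem_X2one hp hrot hα hx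
    rcases hcu with ⟨rfl, rfl⟩ | ⟨rfl, rfl⟩
    · exact Or.inl ⟨y, hy, by ring⟩
    · exact Or.inr ⟨y, hy, by ring⟩
  · rintro (hx | hx)
    · exact image_subset_X2one hp hrot hα (Or.inl ⟨rfl, rfl⟩) (by simpa using hx)
    · exact image_subset_X2one hp hrot hα (Or.inr ⟨rfl, rfl⟩) (by simpa using hx)

/-- X²₁ = ψ₁(X²₁) ∪ ψ₂(X²₁) with ψ₁(z) = α·conj z, ψ₂(z) = αe^{iθ}·conj z + α. -/
theorem X2one_set_equation (α : ℂ) (θ : ℝ) (p : ℕ) (q : ℤ) (hp : 0 < p)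
    (hθ : θ = 2 * Real.pi * (q : ℝ) / (p : ℝ)) (hα0 : 0 < ‖α‖) (hα : ‖α‖ < 1) :
    X2one α θ p =
      (fun z => α * starRingEnd ℂ z) '' X2one α θ p ∪
      (fun z => α * rot θ * starRingEnd ℂ z + α) '' X2one α θ p :=
  X2one_set_equation_general α θ p q hp hθ hα
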